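/- Let γ > 0 and b > 0. For every bounded continuous function f : [0,∞) → ℝ and every M > 0, one has lim_{t → 0⁺} sup_{x ∈ [0,M]} |P_t^{γ,b} f(x) − f(x)| = 0. -/

import Mathlib

/-!
`P_t^{γ,b} f(x)` is the mean of `f (γ t Z)`, where `Z` has the Gamma law of shape `N + b/γ` and
`N` is Poisson of mean `s = x/(γt)`. From the first two moments of both laws, this kernel has
second moment `2γtx + γbt² + b²t²` about `x`, which is `O(t)` uniformly for `x ∈ [0, M]`.
Korovkin's argument then concludes: a bounded `f`, uniformly continuous on `[0, M + 1]`, satisfies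
`|f u - f x| ≤ ε + C_ε (u - x)²` for `x ∈ [0, M]`, `u ≥ 0`, hence
`|P_t f(x) - f(x)| ≤ ε + C_ε · O(t)`.
-/

open MeasureTheory

/-- The semigroup `P_t^{γ,b}` (case `b > 0`):
`P_t^{γ,b} f(x) = e^{−x/(γt)} ∑_{m=0}^∞ (x/(γt))^m (1/(m! Γ(m + b/γ)))
  ∫_0^∞ e^{−z} z^{m + b/γ − 1} f(γzt) dz`. -/
noncomputable def Psem (γ b t : ℝ) (f : ℝ → ℝ) (x : ℝ) : ℝ :=
  Real.exp (-x / (γ * t)) *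
    ∑' m : ℕ, (x / (γ * t)) ^ m * (1 / ((m.factorial : ℝ) * Real.Gamma ((m : ℝ) + b / γ))) *
      ∫ z in Set.Ioi (0:ℝ), Real.exp (-z) * z ^ ((m : ℝ) + b / γ - 1) * f (γ * z * t)

/-- The supremum norm of `f` over `[0, ∞)`. -/
noncomputable def supIci (f : ℝ → ℝ) : ℝ := ⨆ y : Set.Ici (0:ℝ), |f (y : ℝ)|

open Real Set Filter Topology
open scoped Nat

lemma hasSum_pow_div_factorial (s : ℝ) : HasSum (fun m : ℕ => s ^ m / m !) (exp s) := by
  rw [Real.exp_eq_exp_ℝ]; exact NormedSpace.expSeries_div_hasSum_exp s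

lemma succ_mul_pow_succ_div_factorial (s : ℝ) (m : ℕ) :
    ((m : ℝ) + 1) * (s ^ (m + 1) / (m + 1)!) = s * (s ^ m / m !) := by
  rw [Nat.factorial_succ]; push_cast; field_simp; ring

lemma hasSum_natCast_mul_pow_div_factorial (s : ℝ) :
    HasSum (fun m : ℕ => m * (s ^ m / m !)) (s * exp s) := by
  rw [← hasSum_nat_add_iff' 1]
  simpa [succ_mul_pow_succ_div_factorial] using (hasSum_pow_div_factorial s).mul_left s

lemma hasSum_natCast_sq_mul_pow_div_factorial (s : ℝ) :
    HasSum (fun m : ℕ => (m : ℝ) ^ 2 * (s ^ m / m !)) ((s ^ 2 + s) * exp s) := by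
  rw [← hasSum_nat_add_iff' 1]
  have h := ((hasSum_natCast_mul_pow_div_factorial s).add
    (hasSum_pow_div_factorial s)).mul_left s
  rw [show (s ^ 2 + s) * exp s = s * (s * exp s + exp s) by ring]
  simpa using h.congr_fun fun m => by
    rw [sq, mul_assoc, succ_mul_pow_succ_div_factorial]; ring

lemma hasSum_pow_div_factorial_mul_quadratic (s α β δ : ℝ) :
    HasSum (fun m : ℕ => s ^ m / m ! * (α + β * m + δ * (m : ℝ) ^ 2))
      (exp s * (α + β * s + δ * (s ^ 2 + s))) := by
  rw [show exp s * (α + β * s + δ * (s ^ 2 + s))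
    = α * exp s + β * (s * exp s) + δ * ((s ^ 2 + s) * exp s) by ring]
  exact ((((hasSum_pow_div_factorial s).mul_left α).add
    ((hasSum_natCast_mul_pow_div_factorial s).mul_left β)).add
    ((hasSum_natCast_sq_mul_pow_div_factorial s).mul_left δ)).congr_fun fun m => by ring

noncomputable def gammaAverage (p : ℝ) (g : ℝ → ℝ) : ℝ :=
  (Gamma p)⁻¹ * ∫ z in Ioi 0, exp (-z) * z ^ (p - 1) * g z

section GammaAverage

variable {p : ℝ}

lemma gammaKernel_mul_sq_eqOn (a x : ℝ) :
    EqOn (fun z : ℝ => exp (-z) * z ^ (p - 1) * (a * z - x) ^ 2)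
      (fun z => a ^ 2 * (exp (-z) * z ^ (p + 2 - 1)) - 2 * a * x * (exp (-z) * z ^ (p + 1 - 1))
        + x ^ 2 * (exp (-z) * z ^ (p - 1))) (Ioi 0) := by
  intro z hz
  have hz0 : z ≠ 0 := (mem_Ioi.mp hz).ne'
  dsimp only
  rw [show p + 2 - 1 = p - 1 + 1 + 1 by ring, show p + 1 - 1 = p - 1 + 1 by ring,
    rpow_add_one hz0, rpow_add_one hz0]
  ring

lemma integrableOn_gammaKernel_mul_sq (hp : 0 < p) (a x : ℝ) :
    IntegrableOn (fun z : ℝ => exp (-z) * z ^ (p - 1) * (a * z - x) ^ 2) (Ioi 0) :=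
  IntegrableOn.congr_fun ((((GammaIntegral_convergent (by linarith)).const_mul _).sub
    ((GammaIntegral_convergent (by linarith)).const_mul _)).add
    ((GammaIntegral_convergent hp).const_mul _))
    (gammaKernel_mul_sq_eqOn a x).symm measurableSet_Ioi

lemma integral_gammaKernel_mul_sq (hp : 0 < p) (a x : ℝ) :
    ∫ z in Ioi 0, exp (-z) * z ^ (p - 1) * (a * z - x) ^ 2
      = Gamma p * ((a * p - x) ^ 2 + a ^ 2 * p) := by
  have hp1 : 0 < p + 1 := by linarith
  have hp2 : 0 < p + 2 := by linarith
  have hk := GammaIntegral_convergent hp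
  have hk1 := GammaIntegral_convergent hp1
  have hk2 := GammaIntegral_convergent hp2
  have hk21 : IntegrableOn (fun z : ℝ => a ^ 2 * (exp (-z) * z ^ (p + 2 - 1))
      - 2 * a * x * (exp (-z) * z ^ (p + 1 - 1))) (Ioi 0) :=
    (hk2.const_mul _).sub (hk1.const_mul _)
  rw [setIntegral_congr_fun measurableSet_Ioi (gammaKernel_mul_sq_eqOn a x),
    integral_add hk21 (hk.const_mul _),
    integral_sub (hk2.const_mul _) (hk1.const_mul _),
    integral_const_mul, integral_const_mul, integral_const_mul,
    ← Gamma_eq_integral hp, ← Gamma_eq_integral hp1, ← Gamma_eq_integral hp2,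
    show p + 2 = (p + 1) + 1 by ring, Gamma_add_one hp1.ne', Gamma_add_one hp.ne']
  ring

lemma abs_gammaAverage_sub_le {g : ℝ → ℝ} {a x y ε C : ℝ} (hp : 0 < p)
    (hg : AEStronglyMeasurable g (volume.restrict (Ioi 0)))
    (hgy : ∀ z > 0, |g z - y| ≤ ε + C * (a * z - x) ^ 2) :
    |gammaAverage p g - y| ≤ ε + C * ((a * p - x) ^ 2 + a ^ 2 * p) := by
  have hΓ : 0 < Gamma p := Gamma_pos_of_pos hp
  have hk := GammaIntegral_convergent hp
  have hksq := integrableOn_gammaKernel_mul_sq hp a x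
  have hdom : IntegrableOn
      (fun z : ℝ => ε * (exp (-z) * z ^ (p - 1))
        + C * (exp (-z) * z ^ (p - 1) * (a * z - x) ^ 2)) (Ioi 0) :=
    (hk.const_mul ε).add (hksq.const_mul C)
  have hle : ∀ᵐ z ∂(volume.restrict (Ioi 0)), ‖exp (-z) * z ^ (p - 1) * (g z - y)‖
      ≤ ε * (exp (-z) * z ^ (p - 1)) + C * (exp (-z) * z ^ (p - 1) * (a * z - x) ^ 2) := by
    filter_upwards [ae_restrict_mem measurableSet_Ioi] with z hz
    have hk : 0 ≤ exp (-z) * z ^ (p - 1) := by have := mem_Ioi.mp hz; positivity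
    rw [norm_mul, Real.norm_of_nonneg hk, Real.norm_eq_abs]
    nlinarith [mul_le_mul_of_nonneg_left (hgy z hz) hk]
  have hint : IntegrableOn (fun z : ℝ => exp (-z) * z ^ (p - 1) * (g z - y)) (Ioi 0) :=
    hdom.mono' (hk.aestronglyMeasurable.mul (hg.sub aestronglyMeasurable_const)) hle
  have hsub : gammaAverage p g - y
      = (Gamma p)⁻¹ * ∫ z in Ioi 0, exp (-z) * z ^ (p - 1) * (g z - y) := by
    have hgint : IntegrableOn (fun z : ℝ => exp (-z) * z ^ (p - 1) * g z) (Ioi 0) :=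
      IntegrableOn.congr_fun (hint.add (hk.mul_const y))
        (fun z _ => by simp only [Pi.add_apply]; ring) measurableSet_Ioi
    simp only [gammaAverage, mul_sub]
    rw [integral_sub hgint (hk.mul_const y), integral_mul_const, ← Gamma_eq_integral hp]
    field_simp
  calc |gammaAverage p g - y|
      ≤ (Gamma p)⁻¹ * ∫ z in Ioi 0, ‖exp (-z) * z ^ (p - 1) * (g z - y)‖ := by
        rw [hsub, abs_mul, abs_of_pos (inv_pos.mpr hΓ), ← Real.norm_eq_abs]
        gcongr
        exact norm_integral_le_integral_norm _
    _ ≤ (Gamma p)⁻¹ * ∫ z in Ioi 0,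
          ε * (exp (-z) * z ^ (p - 1)) + C * (exp (-z) * z ^ (p - 1) * (a * z - x) ^ 2) :=
        mul_le_mul_of_nonneg_left (integral_mono_ae hint.norm hdom hle) (by positivity)
    _ = ε + C * ((a * p - x) ^ 2 + a ^ 2 * p) := by
        rw [integral_add (hk.const_mul ε) (hksq.const_mul C), integral_const_mul,
          integral_const_mul, ← Gamma_eq_integral hp, integral_gammaKernel_mul_sq hp]
        field_simp

end GammaAverage

section Psem

variable {γ b t x ε C : ℝ} {f : ℝ → ℝ}

lemma Psem_eq_tsum :
    Psem γ b t f x = exp (-(x / (γ * t))) *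
      ∑' m : ℕ, (x / (γ * t)) ^ m / m ! *
        gammaAverage (m + b / γ) (fun z => f (γ * z * t)) := by
  simp only [Psem, gammaAverage, neg_div]
  congr 1
  exact tsum_congr fun m => by ring

lemma abs_Psem_sub_le (hγ : 0 < γ) (hb : 0 < b) (ht : 0 < t) (hx : 0 ≤ x)
    (hf : ContinuousOn f (Ici 0)) (hfx : ∀ u ≥ 0, |f u - f x| ≤ ε + C * (u - x) ^ 2) :
    |Psem γ b t f x - f x| ≤ ε + C * (2 * γ * t * x + γ * b * t ^ 2 + b ^ 2 * t ^ 2) := by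
  set a := γ * t
  set s := x / a
  set c := b / γ
  set w : ℕ → ℝ := fun m => s ^ m / (m ! : ℝ)
  set A : ℕ → ℝ := fun m => gammaAverage (m + c) (fun z => f (γ * z * t))
  have ha : 0 < a := mul_pos hγ ht
  have hw : ∀ m, 0 ≤ w m := fun m => by positivity
  have hmeas : AEStronglyMeasurable (fun z => f (γ * z * t)) (volume.restrict (Ioi 0)) :=
    (hf.comp (by fun_prop) fun z (hz : 0 < z) => by
      show 0 ≤ γ * z * t; positivity).aestronglyMeasurable measurableSet_Ioi
  have hA : ∀ m : ℕ, |A m - f x| ≤ ε + C * ((a * (m + c) - x) ^ 2 + a ^ 2 * (m + c)) :=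
    fun m => abs_gammaAverage_sub_le (by positivity) hmeas fun z hz => by
      simpa only [a, mul_right_comm γ z t] using hfx _ (by positivity)
  -- Poisson(s) has mean and variance `s`, and `a * s = x`.
  have hW : HasSum (fun m : ℕ => w m * (ε + C * ((a * (m + c) - x) ^ 2 + a ^ 2 * (m + c))))
      (exp s * (ε + C * (2 * γ * t * x + γ * b * t ^ 2 + b ^ 2 * t ^ 2))) := by
    convert hasSum_pow_div_factorial_mul_quadratic s (ε + C * ((a * c - x) ^ 2 + a ^ 2 * c))
      (C * (2 * a * (a * c - x) + a ^ 2)) (C * a ^ 2) using 1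
    · ext m; ring
    · simp only [a, s, c]; field_simp; ring
  have hT : ∀ m, ‖w m * (A m - f x)‖
      ≤ w m * (ε + C * ((a * (m + c) - x) ^ 2 + a ^ 2 * (m + c))) := fun m => by
    rw [norm_mul, Real.norm_of_nonneg (hw m), Real.norm_eq_abs]; gcongr; exact hA m
  have hsplit : ∑' m, w m * A m = ∑' m, w m * (A m - f x) + exp s * f x :=
    (((Summable.of_norm_bounded hW.summable hT).hasSum.add
      ((hasSum_pow_div_factorial s).mul_right (f x))).congr_fun fun m => by ring).tsum_eq
  have hexp : exp (-s) * exp s = 1 := by rw [← exp_add, neg_add_cancel, exp_zero]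
  calc |Psem γ b t f x - f x| = exp (-s) * ‖∑' m, w m * (A m - f x)‖ := by
        rw [Psem_eq_tsum]
        change |exp (-s) * ∑' m, w m * A m - f x| = _
        rw [hsplit, mul_add, ← mul_assoc, hexp, one_mul, add_sub_cancel_right,
          abs_mul, abs_of_pos (exp_pos _), Real.norm_eq_abs]
    _ ≤ exp (-s) * (exp s * (ε + C * (2 * γ * t * x + γ * b * t ^ 2 + b ^ 2 * t ^ 2))) := by
        gcongr; exact tsum_of_norm_bounded hW hT
    _ = ε + C * (2 * γ * t * x + γ * b * t ^ 2 + b ^ 2 * t ^ 2) := by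
        rw [← mul_assoc, hexp, one_mul]

end Psem

lemma exists_abs_sub_le_add_mul_sq {f : ℝ → ℝ} {K M ε : ℝ} (hf : ContinuousOn f (Ici 0))
    (hK : ∀ y ≥ 0, |f y| ≤ K) (hε : 0 < ε) :
    ∃ C ≥ 0, ∀ x ∈ Icc 0 M, ∀ u ≥ 0, |f u - f x| ≤ ε + C * (u - x) ^ 2 := by
  have hfu : UniformContinuousOn f (Icc 0 (M + 1)) :=
    isCompact_Icc.uniformContinuousOn_of_continuous (hf.mono Icc_subset_Ici_self)
  obtain ⟨δ, hδ, hfδ⟩ := Metric.uniformContinuousOn_iff.mp hfu ε hε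
  set r := min δ 1
  have hr : 0 < r := lt_min hδ one_pos
  have hK0 : 0 ≤ K := (abs_nonneg _).trans (hK 0 le_rfl)
  refine ⟨2 * K / r ^ 2, by positivity, fun x hx u hu => ?_⟩
  have hquad : 0 ≤ 2 * K / r ^ 2 * (u - x) ^ 2 := by positivity
  rcases lt_or_ge |u - x| r with hnear | hfar
  · have hux := (abs_lt.mp hnear).2
    have hclose := hfδ u ⟨hu, by linarith [min_le_right δ 1, hx.2]⟩ x
      ⟨hx.1, by linarith [hx.2]⟩ (hnear.trans_le (min_le_left _ _))
    rw [Real.dist_eq] at hclose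
    linarith
  · have h2K : |f u - f x| ≤ 2 * K := (abs_sub _ _).trans (by linarith [hK u hu, hK x hx.1])
    have hr2 : r ^ 2 ≤ (u - x) ^ 2 := by
      rw [← sq_abs (u - x)]; exact pow_le_pow_left₀ hr.le hfar 2
    have : 2 * K ≤ 2 * K / r ^ 2 * (u - x) ^ 2 :=
      calc 2 * K = 2 * K / r ^ 2 * r ^ 2 := by field_simp
        _ ≤ 2 * K / r ^ 2 * (u - x) ^ 2 := by gcongr
    linarith

/-- Let `γ > 0`, `b > 0`. For every bounded continuous `f : [0,∞) → ℝ` and every `M > 0`,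
`lim_{t → 0⁺} sup_{x ∈ [0,M]} |P_t^{γ,b} f(x) − f(x)| = 0`. -/
theorem stmt11 (γ b : ℝ) (hγ : 0 < γ) (hb : 0 < b) (f : ℝ → ℝ)
    (hf : ContinuousOn f (Set.Ici 0)) (hbd : ∃ K, ∀ y ≥ (0:ℝ), |f y| ≤ K)
    (M : ℝ) (hM : 0 < M) :
    Filter.Tendsto (fun t => ⨆ x : Set.Icc (0:ℝ) M, |Psem γ b t f (x : ℝ) - f (x : ℝ)|)
      (nhdsWithin 0 (Set.Ioi 0)) (nhds 0) := by
  obtain ⟨K, hK⟩ := hbd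
  rw [Metric.tendsto_nhds]
  intro ε hε
  obtain ⟨C, hC, hfC⟩ := exists_abs_sub_le_add_mul_sq (M := M) hf hK (half_pos hε)
  set bound : ℝ → ℝ := fun t => ε / 2 + C * (2 * γ * t * M + γ * b * t ^ 2 + b ^ 2 * t ^ 2)
  have hbound : Tendsto bound (𝓝[>] 0) (𝓝 (ε / 2)) := by
    simpa [bound] using ((by fun_prop : Continuous bound).tendsto 0).mono_left nhdsWithin_le_nhds
  filter_upwards [self_mem_nhdsWithin, hbound.eventually (gt_mem_nhds (half_lt_self hε))]
    with t (ht : 0 < t) hlt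
  have hsup : ⨆ x : Icc (0:ℝ) M, |Psem γ b t f x - f x| ≤ bound t :=
    Real.iSup_le (fun x => (abs_Psem_sub_le hγ hb ht x.2.1 hf (hfC x x.2)).trans
      (by dsimp only [bound]; gcongr; exact x.2.2)) (by positivity)
  rw [Real.dist_0_eq_abs, abs_of_nonneg (Real.iSup_nonneg fun _ => abs_nonneg _)]
  exact hsup.trans_lt hlt
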